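/- arXiv:0812.0195 — 3 statements merged into one kernel-verified Lean document; each statement's English description precedes it below -/
import Mathlib

section
/- Let A = (v_1, …, v_q) ⊂ ℤ^n be a homogeneous normal configuration, and suppose g = T_1^{b_1}⋯T_r^{b_r} − T_{r+1}^{b_{r+1}}⋯T_s^{b_s} is a binomial in the toric ideal I_A with all b_i ≥ 1, with max{b_1,…,b_r} < max{b_{r+1},…,b_s}, and with b_k = max{b_{r+1},…,b_s} for some k ∈ {r+1,…,s}. Then there exists γ ∈ ℕ^q such that the binomial T_1 T_2 ⋯ T_r − T_k·T^γ lies in I_A; in particular, g has a connector. -/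
open MvPolynomial

/-- The binomial `T^a - T^b` in `K[T_1,…,T_q]`. -/
noncomputable def binom (K : Type*) [Field K] {q : ℕ} (a b : Fin q → ℕ) :
    MvPolynomial (Fin q) K :=
  monomial (Finsupp.equivFunOnFinite.symm a) 1 -
    monomial (Finsupp.equivFunOnFinite.symm b) 1

/-- The toric ideal of the configuration `v`. -/
noncomputable def toricIdeal (K : Type*) [Field K] {n q : ℕ} (v : Fin q → Fin n → ℤ) :
    Ideal (MvPolynomial (Fin q) K) :=
  Ideal.span { f | ∃ a b : Fin q → ℕ,
    (∑ i, a i • v i) = (∑ i, b i • v i) ∧ f = binom K a b }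

/-- `α` is a circuit of the configuration `v`. -/
def IsCircuitVec {n q : ℕ} (v : Fin q → Fin n → ℤ) (α : Fin q → ℤ) : Prop :=
  α ≠ 0 ∧ (∑ i, α i • v i) = 0 ∧
    (∀ β : Fin q → ℚ, (∑ i, β i • (fun l => (v i l : ℚ))) = 0 → β ≠ 0 →
      Function.support β ⊆ Function.support α →
      Function.support β = Function.support α) ∧
    Finset.univ.gcd α = 1

def posExp {q : ℕ} (α : Fin q → ℤ) : Fin q → ℕ := fun i => (α i).toNat

def negExp {q : ℕ} (α : Fin q → ℤ) : Fin q → ℕ := fun i => (-(α i)).toNat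

/-- The binomial `T^a - T^b` has a square-free term. -/
def SqFreePair {q : ℕ} (a b : Fin q → ℕ) : Prop :=
  (∀ i, a i ≤ 1) ∨ (∀ i, b i ≤ 1)

/-- `f` is a circuit of the toric ideal of `v`. -/
def IsCircuitPoly (K : Type*) [Field K] {n q : ℕ} (v : Fin q → Fin n → ℤ)
    (f : MvPolynomial (Fin q) K) : Prop :=
  ∃ α : Fin q → ℤ, IsCircuitVec v α ∧ f = binom K (posExp α) (negExp α)

/-- `f` is a circuit of the toric ideal of `v` having a square-free term. -/
def IsSqFreeCircuitPoly (K : Type*) [Field K] {n q : ℕ} (v : Fin q → Fin n → ℤ)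
    (f : MvPolynomial (Fin q) K) : Prop :=
  ∃ α : Fin q → ℤ, IsCircuitVec v α ∧ f = binom K (posExp α) (negExp α) ∧
    SqFreePair (posExp α) (negExp α)

/-- The configuration lies on an affine hyperplane off the origin. -/
def IsHomogeneousConfig {n q : ℕ} (v : Fin q → Fin n → ℤ) : Prop :=
  ∃ w : Fin n → ℝ, ∀ i, (∑ l, w l * (v i l : ℝ)) = 1

/-- `ℕA = ℤA ∩ ℝ₊A`. -/
def IsNormalConfig {n q : ℕ} (v : Fin q → Fin n → ℤ) : Prop :=
  ∀ x : Fin n → ℤ,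
    x ∈ AddSubmonoid.closure (Set.range v) ↔
      (x ∈ AddSubgroup.closure (Set.range v) ∧
        ∃ c : Fin q → ℝ, (∀ i, 0 ≤ c i) ∧ ∀ l, (x l : ℝ) = ∑ i, c i * (v i l : ℝ))

/-- The toric ideal is generated by a finite set of circuits. -/
def GenByCircuits (K : Type*) [Field K] {n q : ℕ} (v : Fin q → Fin n → ℤ) : Prop :=
  ∃ S : Finset (MvPolynomial (Fin q) K),
    (∀ f ∈ S, IsCircuitPoly K v f) ∧
      Ideal.span (S : Set (MvPolynomial (Fin q) K)) = toricIdeal K v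

/-- The toric ideal is generated by a finite set of circuits with a square-free term. -/
def GenBySqFreeCircuits (K : Type*) [Field K] {n q : ℕ} (v : Fin q → Fin n → ℤ) : Prop :=
  ∃ S : Finset (MvPolynomial (Fin q) K),
    (∀ f ∈ S, IsSqFreeCircuitPoly K v f) ∧
      Ideal.span (S : Set (MvPolynomial (Fin q) K)) = toricIdeal K v

/-- `f` is a connector of the unbalanced binomial `T^a - T^b`, where `a` is the term
with the smaller maximal exponent and `b` the one with the larger maximal exponent. -/
def IsConnector (K : Type*) [Field K] {n q : ℕ} (v : Fin q → Fin n → ℤ)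
    (a b : Fin q → ℕ) (f : MvPolynomial (Fin q) K) : Prop :=
  ∃ c d : Fin q → ℕ, f = binom K c d ∧ f ∈ toricIdeal K v ∧
    (∀ i, c i ≤ 1) ∧ (∀ i, c i ≠ 0 → a i ≠ 0) ∧ (∃ i, d i ≠ 0 ∧ b i ≠ 0)

/-- Every unbalanced circuit of the toric ideal has a connector which is a
`K[T]`-linear combination of circuits with a square-free term. -/
def ConnectorCondition (K : Type*) [Field K] {n q : ℕ} (v : Fin q → Fin n → ℤ) : Prop :=
  ∀ α : Fin q → ℤ, IsCircuitVec v α →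
    Finset.univ.sup (posExp α) < Finset.univ.sup (negExp α) →
    ∃ f : MvPolynomial (Fin q) K, IsConnector K v (posExp α) (negExp α) f ∧
      f ∈ Ideal.span { g : MvPolynomial (Fin q) K | IsSqFreeCircuitPoly K v g }

/-!
Write `b i = min (a i) 1`. The lattice point `x = ∑ b i • v i - v k` lies in `ℤA`, and the
relation `∑ a i • v i = ∑ c i • v i` rewrites it as
`x = ∑ (b i - [i = k] + (c i - a i) / c k) • v i`. Each of these real coefficients is
nonnegative because `a i ≤ max a < max c = c k`, so `x ∈ ℝ₊A`, and normality gives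
`x = ∑ γ i • v i` with `γ ∈ ℕ^q`, i.e. `T^b - T_k T^γ` lies in the toric ideal.
-/

/-- `T_i ↦ x^{v i}`, into the Laurent polynomial ring `K[ℤ^n]`. -/
noncomputable def toricMap (K : Type*) [Field K] {n q : ℕ} (v : Fin q → Fin n → ℤ) :
    MvPolynomial (Fin q) K →ₐ[K] AddMonoidAlgebra K (Fin n → ℤ) :=
  aeval fun i => AddMonoidAlgebra.single (v i) 1

lemma toricMap_monomial (K : Type*) [Field K] {n q : ℕ} (v : Fin q → Fin n → ℤ)
    (a : Fin q → ℕ) :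
    toricMap K v (monomial (Finsupp.equivFunOnFinite.symm a) 1) =
      AddMonoidAlgebra.single (∑ i, a i • v i) 1 := by
  rw [toricMap, aeval_monomial, map_one, one_mul, Finsupp.prod_fintype _ _ (by simp)]
  simp_rw [AddMonoidAlgebra.single_pow, one_pow, Finsupp.coe_equivFunOnFinite_symm,
    AddMonoidAlgebra.prod_single, Finset.prod_const_one]

lemma toricIdeal_le_ker_toricMap (K : Type*) [Field K] {n q : ℕ} (v : Fin q → Fin n → ℤ) :
    toricIdeal K v ≤ RingHom.ker (toricMap K v) := by
  rw [toricIdeal, Ideal.span_le]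
  rintro f ⟨a, b, hab, rfl⟩
  rw [SetLike.mem_coe, RingHom.mem_ker, binom, map_sub, toricMap_monomial, toricMap_monomial,
    hab, sub_self]

lemma sum_smul_eq_of_binom_mem_toricIdeal (K : Type*) [Field K] {n q : ℕ}
    {v : Fin q → Fin n → ℤ} {a b : Fin q → ℕ} (h : binom K a b ∈ toricIdeal K v) :
    ∑ i, a i • v i = ∑ i, b i • v i := by
  have hker := toricIdeal_le_ker_toricMap K v h
  rw [RingHom.mem_ker, binom, map_sub, toricMap_monomial, toricMap_monomial, sub_eq_zero] at hker
  exact AddMonoidAlgebra.single_left_injective one_ne_zero hker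

lemma binom_mem_toricIdeal (K : Type*) [Field K] {n q : ℕ} {v : Fin q → Fin n → ℤ}
    {a b : Fin q → ℕ} (h : ∑ i, a i • v i = ∑ i, b i • v i) :
    binom K a b ∈ toricIdeal K v :=
  Ideal.subset_span ⟨a, b, h, rfl⟩

lemma IsNormalConfig.exists_nat_coeffs {n q : ℕ} {v : Fin q → Fin n → ℤ}
    (hnorm : IsNormalConfig v) (e : Fin q → ℤ) {d : Fin q → ℝ} (hd : ∀ i, 0 ≤ d i)
    (hed : ∀ l, ∑ i, (e i : ℝ) * v i l = ∑ i, d i * v i l) :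
    ∃ γ : Fin q → ℕ, ∑ i, e i • v i = ∑ i, γ i • v i := by
  refine AddSubmonoid.exists_of_mem_closure_range _ _ ((hnorm _).2 ⟨?_, d, hd, fun l => ?_⟩)
  · exact AddSubgroup.mem_closure_range_iff_of_fintype.2 ⟨e, rfl⟩
  · simpa [Finset.sum_apply] using hed l

lemma sum_add_mul_sub_mul_eq {R ι : Type*} [CommRing R] [Fintype ι] {w a c : ι → R}
    (h : ∑ i, a i * w i = ∑ i, c i * w i) (e : ι → R) (t : R) :
    ∑ i, (e i + t * (c i - a i)) * w i = ∑ i, e i * w i := by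
  simp only [add_mul, sub_mul, mul_sub, Finset.sum_add_distrib, Finset.sum_sub_distrib,
    mul_assoc, ← Finset.mul_sum, h, sub_self, add_zero]

lemma Nat.cast_div_le_min_one {a m : ℕ} (h : a ≤ m) :
    (a : ℝ) / m ≤ ((min a 1 : ℕ) : ℝ) := by
  rcases Nat.eq_zero_or_pos a with rfl | ha
  · simp
  · rw [min_eq_right ha, Nat.cast_one]
    exact div_le_one_of_le₀ (by exact_mod_cast h) (Nat.cast_nonneg m)

theorem exists_connector_of_unbalanced_general (K : Type*) [Field K] {n q : ℕ}
    (v : Fin q → Fin n → ℤ) (hnorm : IsNormalConfig v)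
    (a c : Fin q → ℕ)
    (hmem : binom K a c ∈ toricIdeal K v)
    (hunbal : Finset.univ.sup a < Finset.univ.sup c)
    (k : Fin q) (hk : c k = Finset.univ.sup c) :
    ∃ γ : Fin q → ℕ,
      binom K (fun i => min (a i) 1) (fun i => γ i + if i = k then 1 else 0) ∈
          toricIdeal K v ∧
        IsConnector K v a c
          (binom K (fun i => min (a i) 1) (fun i => γ i + if i = k then 1 else 0)) := by
  set b : Fin q → ℕ := fun i => min (a i) 1
  set e : Fin q → ℤ := fun i => b i - if i = k then 1 else 0
  have hck : 0 < c k := hk ▸ (Nat.zero_le _).trans_lt hunbal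
  have ha_le : ∀ i, a i ≤ c k := fun i =>
    hk ▸ (Finset.le_sup (Finset.mem_univ i)).trans hunbal.le
  have hrel : ∀ l, ∑ i, (a i : ℝ) * v i l = ∑ i, (c i : ℝ) * v i l := fun l => by
    simpa [Finset.sum_apply] using
      congrArg (fun x : Fin n → ℤ => (x l : ℝ)) (sum_smul_eq_of_binom_mem_toricIdeal K hmem)
  have hd : ∀ i, 0 ≤ (e i : ℝ) + (c k : ℝ)⁻¹ * (c i - a i) := fun i => by
    have hb : (a i : ℝ) / c k ≤ b i := Nat.cast_div_le_min_one (ha_le i)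
    have hc : ((if i = k then 1 else 0 : ℕ) : ℝ) ≤ c i / c k := by
      split_ifs with hik
      · rw [hik, Nat.cast_one, div_self (by positivity)]
      · simp only [Nat.cast_zero]; positivity
    simp only [e, Int.cast_sub, Int.cast_natCast, mul_sub, inv_mul_eq_div]
    push_cast at hc ⊢
    linarith
  obtain ⟨γ, hγ⟩ :=
    hnorm.exists_nat_coeffs e hd fun l => (sum_add_mul_sub_mul_eq (hrel l) _ _).symm
  have hsum : ∑ i, b i • v i = ∑ i, (γ i + if i = k then 1 else 0) • v i := by
    have hx : ∑ i, e i • v i = ∑ i, b i • v i - v k := by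
      simp [e, sub_smul, Finset.sum_sub_distrib, ite_smul]
    simp only [add_smul, Finset.sum_add_distrib, ite_smul, one_smul, zero_smul,
      Finset.sum_ite_eq', Finset.mem_univ, if_true, ← hγ, hx, sub_add_cancel]
  have hconn := binom_mem_toricIdeal K (v := v) hsum
  exact ⟨γ, hconn, b, _, rfl, hconn, fun i => min_le_right _ _,
    fun i hi ha => hi (by simp [b, ha]), k, by simp, hck.ne'⟩

/-- Let `v` be a homogeneous normal configuration and let `g = T^a - T^c` be a binomial of
the toric ideal (with disjoint supports of `a` and `c`) whose first term has strictly
smaller maximal exponent, the maximum of `c` being attained at `k`.  Then there is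
`γ ∈ ℕ^q` with `∏_{i ∈ supp a} T_i - T_k T^γ` in the toric ideal; in particular `g`
has a connector. -/
theorem exists_connector_of_unbalanced (K : Type*) [Field K] {n q : ℕ}
    (hn : 0 < n) (hq : 0 < q) (v : Fin q → Fin n → ℤ)
    (hhom : IsHomogeneousConfig v) (hnorm : IsNormalConfig v)
    (a c : Fin q → ℕ) (hdisj : ∀ i, a i = 0 ∨ c i = 0)
    (hmem : binom K a c ∈ toricIdeal K v)
    (hunbal : Finset.univ.sup a < Finset.univ.sup c)
    (k : Fin q) (hk : c k = Finset.univ.sup c) :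
    ∃ γ : Fin q → ℕ,
      binom K (fun i => min (a i) 1) (fun i => γ i + if i = k then 1 else 0) ∈
          toricIdeal K v ∧
        IsConnector K v a c
          (binom K (fun i => min (a i) 1) (fun i => γ i + if i = k then 1 else 0)) :=
  exists_connector_of_unbalanced_general K v hnorm a c hmem hunbal k hk
end

section
/- Let A = (v_1, …, v_q) ⊂ ℤ^n be a configuration and let V ⊂ ℚ^q be the kernel of the matrix with columns v_1, …, v_q. Then the circuits of A generate the abelian group V ∩ ℤ^q; that is, every integer vector in V is an integer linear combination of circuits of A. -/
open MvPolynomial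

/-! Induction on the support of an integer kernel vector `x ≠ 0`. A rational kernel vector of
minimal support inside `supp x`, scaled to a primitive integer vector, is a circuit `α` with
`supp α ⊆ supp x`. Bézout gives `u` with `∑ αᵢ uᵢ = 1`, and then
`x = ∑ uᵢ (αᵢ x - xᵢ α) + (∑ xᵢ uᵢ) α`, where each `αᵢ x - xᵢ α` is a kernel vector vanishing
at `i`, hence of smaller support than `x`. -/

open Function

section Unimodular

variable {ι R : Type*} [CommRing R]

theorem eq_sum_smul_smul_sub_smul_add_smul [Fintype ι] (x : ι → R) {α u : ι → R}
    (hu : ∑ i, α i * u i = 1) :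
    x = ∑ i, u i • (α i • x - x i • α) + (∑ i, x i * u i) • α := by
  funext j
  simp only [Pi.add_apply, Finset.sum_apply, Pi.smul_apply, Pi.sub_apply, smul_eq_mul]
  have : ∑ i, u i * (α i * x j - x i * α j) =
      (∑ i, α i * u i) * x j - (∑ i, x i * u i) * α j := by
    simp only [Finset.sum_mul, ← Finset.sum_sub_distrib]
    exact Finset.sum_congr rfl fun i _ => by ring
  rw [this, hu]
  ring

theorem support_smul_sub_smul_ssubset {x α : ι → R} (hα : support α ⊆ support x) {i : ι}
    (hi : x i ≠ 0) : support (α i • x - x i • α) ⊂ support x := by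
  refine ⟨fun j hj => ?_, fun h => h hi (by simp [mul_comm])⟩
  by_contra hxj
  have hαj : α j = 0 := notMem_support.1 fun h => hxj (hα h)
  simp [notMem_support.1 hxj, hαj] at hj

theorem Submodule.le_span_of_exists_unimodular_support_subset [Fintype ι] {L : Submodule R (ι → R)}
    {P : Set (ι → R)} (hPL : P ⊆ L)
    (hP : ∀ x ∈ L, x ≠ 0 → ∃ α ∈ P, support α ⊆ support x ∧ ∃ u : ι → R, ∑ i, α i * u i = 1) :
    L ≤ span R P := by
  intro x hx
  induction hs : support x using WellFoundedLT.induction generalizing x with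
  | _ s ih =>
  subst hs
  by_cases hx0 : x = 0
  · exact hx0 ▸ zero_mem _
  obtain ⟨α, hαP, hαx, u, hu⟩ := hP x hx hx0
  rw [eq_sum_smul_smul_sub_smul_add_smul x hu]
  refine add_mem (sum_mem fun i _ => smul_mem _ _ ?_) (smul_mem _ _ (subset_span hαP))
  by_cases hxi : x i = 0
  · have hαi : α i = 0 := notMem_support.1 fun h => hαx h hxi
    simp [hxi, hαi]
  · exact ih _ (support_smul_sub_smul_ssubset hαx hxi)
      (L.sub_mem (L.smul_mem _ hx) (L.smul_mem _ (hPL hαP))) rfl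

end Unimodular

theorem Rat.exists_primitive_intVec_eq_mul {ι : Type*} [Fintype ι] {β : ι → ℚ} (hβ : β ≠ 0) :
    ∃ (c : ℚ) (α : ι → ℤ), c ≠ 0 ∧ (∀ i, (α i : ℚ) = c * β i) ∧ Finset.univ.gcd α = 1 := by
  obtain ⟨⟨b, hb⟩, hz⟩ :=
    IsLocalization.exist_integer_multiples_of_finite (nonZeroDivisors ℤ) β
  choose z hz using hz
  have hb0 : (b : ℚ) ≠ 0 := Int.cast_ne_zero.2 (nonZeroDivisors.ne_zero hb)
  obtain ⟨i₀, hi₀⟩ := Function.ne_iff.1 hβ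
  obtain ⟨α, hzα, hα⟩ := Finset.extract_gcd z ⟨i₀, Finset.mem_univ _⟩
  have hd : ((Finset.univ.gcd z : ℤ) : ℚ) ≠ 0 := by
    refine Int.cast_ne_zero.2 fun h => ?_
    have := Finset.gcd_eq_zero_iff.1 h i₀ (Finset.mem_univ _)
    simp_all
  refine ⟨b / (Finset.univ.gcd z : ℤ), α, div_ne_zero hb0 hd, fun i => ?_, hα⟩
  have := hz i
  rw [hzα i (Finset.mem_univ _), algebraMap_int_eq, eq_intCast, Int.cast_mul,
    zsmul_eq_mul] at this
  rw [div_mul_eq_mul_div, eq_div_iff hd, mul_comm, this]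

theorem sum_intCast_smul_eq_zero_iff {ι m : Type*} [Fintype ι] (v : ι → m → ℤ) (z : ι → ℤ) :
    (∑ i, (z i : ℚ) • (fun l => (v i l : ℚ))) = 0 ↔ ∑ i, z i • v i = 0 := by
  simp only [funext_iff, Finset.sum_apply, Pi.smul_apply, smul_eq_mul, Pi.zero_apply]
  exact forall_congr' fun l => by norm_cast

theorem exists_isCircuitVec_support_subset {n q : ℕ} (v : Fin q → Fin n → ℤ) {x : Fin q → ℤ}
    (hx : ∑ i, x i • v i = 0) (hx0 : x ≠ 0) :
    ∃ α, IsCircuitVec v α ∧ support α ⊆ support x := by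
  set 𝒮 : Set (Set (Fin q)) := {s | ∃ β : Fin q → ℚ, (∑ i, β i • (fun l => (v i l : ℚ))) = 0 ∧
    β ≠ 0 ∧ support β = s ∧ s ⊆ support x}
  have hx𝒮 : support x ∈ 𝒮 := ⟨fun i => x i, (sum_intCast_smul_eq_zero_iff v x).2 hx,
    fun h => hx0 (funext fun i => by simpa using congrFun h i),
    by ext i; simp, subset_rfl⟩
  obtain ⟨s, ⟨β, hβ, hβ0, rfl, hβx⟩, hmin⟩ := wellFounded_lt.has_min 𝒮 ⟨_, hx𝒮⟩
  obtain ⟨c, α, hc, hαβ, hgcd⟩ := Rat.exists_primitive_intVec_eq_mul hβ0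
  have hsupp : support α = support β := by
    ext i
    simp [← Int.cast_eq_zero (α := ℚ), hαβ, hc]
  refine ⟨α, ⟨fun h => hβ0 ?_, ?_, fun γ hγ hγ0 hγα => ?_, hgcd⟩, hsupp ▸ hβx⟩
  · funext i
    simpa [h, hc] using (hαβ i).symm
  · rw [← sum_intCast_smul_eq_zero_iff]
    simp only [hαβ, mul_smul, ← Finset.smul_sum, hβ, smul_zero]
  · rw [hsupp] at hγα ⊢
    by_contra hne
    exact hmin _ ⟨γ, hγ, hγ0, rfl, hγα.trans hβx⟩ (hγα.ssubset_of_ne hne)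

theorem circuits_span_kernel_general {n q : ℕ}
    (v : Fin q → Fin n → ℤ) (x : Fin q → ℤ) (hx : (∑ i, x i • v i) = 0) :
    x ∈ Submodule.span ℤ { α : Fin q → ℤ | IsCircuitVec v α } := by
  refine Submodule.le_span_of_exists_unimodular_support_subset
    (L := LinearMap.ker (Fintype.linearCombination ℤ v)) (fun α hα => hα.2.1)
    (fun y hy hy0 => ?_) hx
  obtain ⟨α, hα, hαy⟩ := exists_isCircuitVec_support_subset v hy hy0
  obtain ⟨u, hu⟩ := Finset.univ.gcd_eq_sum_mul α
  exact ⟨α, hα, hαy, u, by rw [← hu, hα.2.2.2]⟩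

/-- The circuits of a configuration generate `V ∩ ℤ^q` as a group: every integer vector
in the kernel of the matrix with columns `v_1,…,v_q` is an integer linear combination of
circuits. -/
theorem circuits_span_kernel {n q : ℕ} (hn : 0 < n) (hq : 0 < q)
    (v : Fin q → Fin n → ℤ) (x : Fin q → ℤ) (hx : (∑ i, x i • v i) = 0) :
    x ∈ Submodule.span ℤ { α : Fin q → ℤ | IsCircuitVec v α } :=
  circuits_span_kernel_general v x hx
end

section
/- Let A = (v_1, …, v_q) ⊂ ℤ^n be a normal configuration. Then the monomial subring K[F] = K[x^{v_1}, …, x^{v_q}] of the Laurent polynomial ring K[x_1^{±1}, …, x_n^{±1}] is normal, i.e., K[F] is integrally closed in its field of fractions. -/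
open MvPolynomial

/-!
The Laurent polynomial ring `K[ℤⁿ]` is a localization of `K[x₁, …, xₙ]`, hence integrally closed,
so an element of `Frac K[F]` that is integral over `K[F]` is a Laurent polynomial `w` with
`w * s ∈ K[F]` for some nonzero `s ∈ K[F]`. Order `ℤⁿ` lexicographically and let `a` be the leading
exponent of `w`. Leading exponents add under multiplication, so `a` is a difference of two elements
of `ℕA`, i.e. `a ∈ ℤA`. Integrality puts all powers `w ^ k` into a finitely generated
`K[F]`-module, so `k • a ∈ ℕA + U` for a fixed finite `U`, and Dickson's lemma yields
`d • a ∈ ℕA` for some `d > 0`, i.e. `a ∈ ℝ₊A`. Normality gives `a ∈ ℕA`: the leading term of `w`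
lies in `K[F]`, and subtracting it reduces the support of `w`.
-/

open AddMonoidAlgebra

theorem Subalgebra.isIntegrallyClosed_of_forall_mul_mem {R S : Type*} [CommRing R] [CommRing S]
    [IsDomain S] [IsIntegrallyClosed S] [Algebra R S] (T : Subalgebra R S)
    (h : ∀ w : S, IsIntegral T w → ∀ s ∈ T, s ≠ 0 → w * s ∈ T → w ∈ T) :
    IsIntegrallyClosed T := by
  have hinj : Function.Injective (algebraMap T (FractionRing S)) := by
    rw [IsScalarTower.algebraMap_eq T S]
    exact (IsFractionRing.injective S _).comp Subtype.val_injective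
  let φ : FractionRing T →ₐ[T] FractionRing S :=
    IsFractionRing.liftAlgHom (g := Algebra.ofId _ _) hinj
  rw [isIntegrallyClosed_iff (FractionRing T)]
  intro x hx
  obtain ⟨w, hw⟩ := IsIntegrallyClosed.isIntegral_iff.mp ((hx.map φ).tower_top (A := S))
  have hwT : IsIntegral T w :=
    (isIntegral_algebraMap_iff (IsFractionRing.injective S (FractionRing S))).mp (hw ▸ hx.map φ)
  obtain ⟨⟨a, b⟩, hab⟩ := IsLocalization.surj (nonZeroDivisors T) x
  have hwb : w * b = a := by
    apply IsFractionRing.injective S (FractionRing S)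
    have := congrArg φ hab
    simp only [map_mul, AlgHom.commutes] at this
    simpa [hw, IsScalarTower.algebraMap_apply T S (FractionRing S)] using this
  have hb : (b : S) ≠ 0 := fun hb0 => nonZeroDivisors.coe_ne_zero b (Subtype.ext hb0)
  refine ⟨⟨w, h w hwT b b.1.2 hb (hwb ▸ a.2)⟩, φ.injective ?_⟩
  change φ (algebraMap _ _ _) = φ x
  rw [AlgHom.commutes, ← hw, IsScalarTower.algebraMap_apply T S (FractionRing S)]
  rfl

theorem AddMonoidAlgebra.isLocalization_mapDomain {R M G : Type*} [CommSemiring R]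
    [AddCommMonoid M] [AddCommGroup G] (f : M →+ G) (hf : Function.Injective f) (m : M)
    (hm : ∀ g : G, ∃ k : ℕ, g + k • f m ∈ Set.range f) :
    letI := (mapDomainRingHom R f).toAlgebra
    IsLocalization (Submonoid.powers (single m (1 : R))) R[G] := by
  classical
  let _ := (mapDomainRingHom R f).toAlgebra
  have halg : ∀ x, algebraMap R[M] R[G] x = mapDomain f x := fun _ => rfl
  have hpow : ∀ k : ℕ, algebraMap R[M] R[G] (single m 1 ^ k) = single (k • f m) 1 := by
    intro k
    rw [halg, single_pow, one_pow, mapDomain_single, map_nsmul]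
  refine ⟨?_, fun z => ?_, fun {x y} h => ⟨1, by rw [mapDomain_injective hf h]⟩⟩
  · rintro ⟨_, k, rfl⟩
    rw [hpow]
    refine .of_mul_eq_one (single (-(k • f m)) 1) ?_
    rw [single_mul_single, add_neg_cancel, one_mul, one_def]
  choose k hk using hm
  set N := z.coeff.support.sup k
  have hN : ∀ g ∈ z.coeff.support, g + N • f m ∈ Set.range f := by
    intro g hg
    obtain ⟨a, ha⟩ := hk g
    refine ⟨a + (N - k g) • m, ?_⟩
    rw [map_add, ha, map_nsmul, add_assoc, ← add_nsmul, Nat.add_sub_cancel' (Finset.le_sup hg)]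
  have hsupp : ↑(z * single (N • f m) 1).coeff.support ⊆ Set.range f := by
    intro g hg
    obtain ⟨g', hg', rfl⟩ := Finset.mem_image.mp (support_coeff_mul_single_subset _ _ _ hg)
    exact hN g' hg'
  refine ⟨(ofCoeff (Finsupp.comapDomain f (z * single (N • f m) 1).coeff hf.injOn),
    ⟨_, N, rfl⟩), ?_⟩
  rw [hpow, halg]
  ext1
  exact (Finsupp.mapDomain_comapDomain f hf _ hsupp).symm

theorem AddMonoidAlgebra.isIntegrallyClosed_pi_int (R σ : Type*) [CommRing R] [IsDomain R]
    [UniqueFactorizationMonoid R] [Fintype σ] : IsIntegrallyClosed R[σ → ℤ] := by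
  let f : (σ →₀ ℕ) →+ (σ → ℤ) :=
    Finsupp.coeFnAddHom.comp (Finsupp.mapRange.addMonoidHom (Nat.castAddMonoidHom ℤ))
  have hf : Function.Injective f := fun a b h => by
    ext i
    simpa [f] using congrFun h i
  have hm : ∀ g : σ → ℤ, ∃ k : ℕ, g + k • f (Finsupp.equivFunOnFinite.symm 1) ∈ Set.range f := by
    intro g
    set k := ∑ j, (g j).natAbs
    have hk : ∀ i, 0 ≤ g i + k := fun i => by
      have : (g i).natAbs ≤ k :=
        Finset.single_le_sum (f := fun j => (g j).natAbs) (fun _ _ => Nat.zero_le _)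
          (Finset.mem_univ i)
      omega
    refine ⟨k, Finsupp.equivFunOnFinite.symm fun i => (g i + k).toNat, funext fun i => ?_⟩
    simp [f, Int.toNat_of_nonneg (hk i)]
  let _ := (mapDomainRingHom R f).toAlgebra
  have := isLocalization_mapDomain (R := R) f hf (Finsupp.equivFunOnFinite.symm 1) hm
  exact isIntegrallyClosed_of_isLocalization R[σ → ℤ] (R := MvPolynomial σ R)
    (Submonoid.powers (single (Finsupp.equivFunOnFinite.symm 1) 1))
    (powers_le_nonZeroDivisors_of_noZeroDivisors (single_ne_zero.mpr one_ne_zero))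

theorem AddMonoidAlgebra.mem_adjoin_range_single_one_iff {R M ι : Type*} [CommSemiring R]
    [AddCommMonoid M] (v : ι → M) (f : R[M]) :
    f ∈ Algebra.adjoin R (Set.range fun i => single (v i) (1 : R)) ↔
      ↑f.coeff.support ⊆ (AddSubmonoid.closure (Set.range v) : Set M) := by
  have hcl : (Submonoid.closure (Set.range fun i => single (v i) (1 : R)) : Set R[M]) =
      (fun m => single m 1) '' AddSubmonoid.closure (Set.range v) := by
    have := MonoidHom.map_mclosure (of R M) (Set.range (Multiplicative.ofAdd ∘ v))
    rw [← Set.range_comp, ← SetLike.coe_set_eq, Submonoid.coe_map] at this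
    convert this.symm using 1
    · rfl
    rw [show Set.range (Multiplicative.ofAdd ∘ v) = Multiplicative.toAdd ⁻¹' Set.range v from rfl,
      ← AddSubmonoid.toSubmonoid_closure]
    rfl
  rw [← Subalgebra.mem_toSubmodule, Algebra.adjoin_eq_span, hcl, ← supported_eq_span_single,
    mem_supported]

section LeadingExp

variable {R A B : Type*} [Semiring R] [AddMonoid A] [LinearOrder B] {D : A → B} {f g : R[A]}
  {a b : A}

def IsLeadingExp (D : A → B) (f : R[A]) (a : A) : Prop :=
  a ∈ f.coeff.support ∧ ∀ b ∈ f.coeff.support, D b ≤ D a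

theorem exists_isLeadingExp (D : A → B) (hf : f ≠ 0) : ∃ a, IsLeadingExp D f a := by
  obtain ⟨a, ha, hmax⟩ := f.coeff.support.exists_max_image D
    (Finsupp.support_nonempty_iff.mpr (coeff_eq_zero.not.mpr hf))
  exact ⟨a, ha, hmax⟩

variable [AddCommMonoid B] [IsOrderedCancelAddMonoid B]

theorem IsLeadingExp.mul [NoZeroDivisors R] (hD : D.Injective)
    (hadd : ∀ a b, D (a + b) = D a + D b) (hf : IsLeadingExp D f a) (hg : IsLeadingExp D g b) :
    IsLeadingExp D (f * g) (a + b) := by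
  classical
  have huniq : UniqueAdd f.coeff.support g.coeff.support a b := by
    intro a' b' ha' hb' he
    have hsum : D a' + D b' = D a + D b := by rw [← hadd, ← hadd, he]
    have hDa : D a' = D a := (hf.2 a' ha').antisymm <| not_lt.mp fun h =>
      (add_lt_add_of_lt_of_le h (hg.2 b' hb')).ne hsum
    rw [hDa] at hsum
    exact ⟨hD hDa, hD (add_left_cancel hsum)⟩
  refine ⟨?_, fun c hc => ?_⟩
  · rw [Finsupp.mem_support_iff, coeff_mul_add_of_uniqueAdd huniq]
    exact mul_ne_zero (Finsupp.mem_support_iff.mp hf.1) (Finsupp.mem_support_iff.mp hg.1)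
  · obtain ⟨a', ha', b', hb', rfl⟩ := Finset.mem_add.mp (support_coeff_mul_subset f g hc)
    rw [hadd, hadd]
    exact add_le_add (hf.2 a' ha') (hg.2 b' hb')

theorem IsLeadingExp.pow [NoZeroDivisors R] (hD : D.Injective)
    (hadd : ∀ a b, D (a + b) = D a + D b) (hf : IsLeadingExp D f a) (k : ℕ) :
    IsLeadingExp D (f ^ k) (k • a) := by
  induction k with
  | zero =>
    have : Nontrivial R := ⟨⟨_, _, Finsupp.mem_support_iff.mp hf.1⟩⟩
    rw [pow_zero, zero_nsmul, AddMonoidAlgebra.one_def, IsLeadingExp, coeff_single,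
      Finsupp.support_single _ one_ne_zero]
    simp
  | succ k ih => rw [pow_succ, succ_nsmul]; exact ih.mul hD hadd hf

end LeadingExp

open Pointwise in
theorem exists_pos_nsmul_mem_closure_of_forall_nsmul_mem_add {M ι : Type*}
    [AddCancelCommMonoid M] [Fintype ι] (v : ι → M) (U : Finset M) (a : M)
    (h : ∀ k : ℕ, k • a ∈ (AddSubmonoid.closure (Set.range v) : Set M) + ↑U) :
    ∃ d : ℕ, 0 < d ∧ d • a ∈ AddSubmonoid.closure (Set.range v) := by
  choose s hs u hu hsu using fun k => Set.mem_add.mp (h k)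
  choose m hm using fun k => AddSubmonoid.mem_closure_range_iff_of_fintype.mp (hs k)
  obtain ⟨i, j, hij, hui, hle⟩ := ((Finite.wellQuasiOrdered (· = ·)).prod wellQuasiOrdered_le)
    fun k => ((⟨u k, hu k⟩ : U), m k)
  have hui : u i = u j := congrArg Subtype.val hui
  refine ⟨j - i, Nat.sub_pos_of_lt hij, ?_⟩
  have : (j - i) • a + i • a = (∑ l, (m j l - m i l) • v l) + i • a := by
    rw [← add_nsmul, Nat.sub_add_cancel hij.le, ← hsu, ← hsu, hm, hm, ← add_assoc,
      ← Finset.sum_add_distrib, hui]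
    congr 1
    exact Finset.sum_congr rfl fun l _ => by rw [← add_nsmul, Nat.sub_add_cancel (hle l)]
  rw [add_right_cancel this]
  exact sum_mem fun l _ =>
    AddSubmonoid.nsmul_mem _ (AddSubmonoid.subset_closure (Set.mem_range_self l)) _

open Pointwise in
theorem exists_finset_support_pow_subset_add {R M : Type*} [CommRing R] [AddCommMonoid M]
    {S : AddSubmonoid M} {T : Subalgebra R R[M]} (hT : ∀ t ∈ T, ↑t.coeff.support ⊆ (S : Set M))
    {w : R[M]} (hw : IsIntegral T w) :
    ∃ U : Finset M, ∀ k : ℕ, ↑(w ^ k).coeff.support ⊆ (S : Set M) + ↑U := by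
  classical
  obtain ⟨F, hF⟩ := hw.fg_adjoin_singleton
  refine ⟨F.biUnion fun t => t.coeff.support, fun k => ?_⟩
  have hk : w ^ k ∈ Submodule.span T (F : Set R[M]) := by
    rw [hF]
    exact pow_mem (Algebra.self_mem_adjoin_singleton T w) k
  generalize w ^ k = x at hk
  induction hk using Submodule.span_induction with
  | mem t ht =>
    intro c hc
    exact Set.mem_add.mpr ⟨0, S.zero_mem, c, Finset.mem_biUnion.mpr ⟨t, ht, hc⟩, zero_add c⟩
  | zero => simp
  | add x y _ _ hx hy =>
    intro c hc
    rw [Finset.mem_coe, AddMonoidAlgebra.coeff_add] at hc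
    rcases Finset.mem_union.mp (Finsupp.support_add hc) with h | h
    exacts [hx h, hy h]
  | smul r x _ hx =>
    intro c hc
    obtain ⟨c₁, hc₁, c₂, hc₂, rfl⟩ := Finset.mem_add.mp (support_coeff_mul_subset (r : R[M]) x hc)
    obtain ⟨s, hs, u, hu, rfl⟩ := Set.mem_add.mp (hx hc₂)
    exact Set.mem_add.mpr ⟨c₁ + s, S.add_mem (hT r r.2 hc₁) hs, u, hu, add_assoc _ _ _⟩

theorem IsNormalConfig.mem_closure_of_nsmul_mem {n q : ℕ} {v : Fin q → Fin n → ℤ}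
    (hnorm : IsNormalConfig v) {a : Fin n → ℤ} (ha : a ∈ AddSubgroup.closure (Set.range v))
    {d : ℕ} (hd : 0 < d) (hda : d • a ∈ AddSubmonoid.closure (Set.range v)) :
    a ∈ AddSubmonoid.closure (Set.range v) := by
  obtain ⟨m, hm⟩ := AddSubmonoid.mem_closure_range_iff_of_fintype.mp hda
  refine (hnorm a).mpr ⟨ha, fun i => m i / d, fun i => by positivity, fun l => ?_⟩
  have hl : (d : ℝ) * a l = ∑ i, (m i : ℝ) * v i l := by
    have := congrFun hm l
    simp only [Pi.smul_apply, Finset.sum_apply] at this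
    exact_mod_cast this
  simp only [div_mul_eq_mul_div, ← Finset.sum_div, ← hl]
  field_simp

theorem mem_of_isIntegral_of_mul_mem {R G B ι : Type*} [CommRing R] [IsDomain R] [AddCommGroup G]
    [AddCommMonoid B] [LinearOrder B] [IsOrderedCancelAddMonoid B] [Fintype ι] {D : G → B}
    (hD : D.Injective) (hadd : ∀ a b, D (a + b) = D a + D b) {v : ι → G} {T : Subalgebra R R[G]}
    (hT : ∀ f, f ∈ T ↔ ↑f.coeff.support ⊆ (AddSubmonoid.closure (Set.range v) : Set G))
    (hsat : ∀ a ∈ AddSubgroup.closure (Set.range v), ∀ d : ℕ, 0 < d →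
      d • a ∈ AddSubmonoid.closure (Set.range v) → a ∈ AddSubmonoid.closure (Set.range v))
    {w s : R[G]} (hw : IsIntegral T w) (hs : s ∈ T) (hs0 : s ≠ 0) (hws : w * s ∈ T) : w ∈ T := by
  classical
  induction hN : w.coeff.support.card using Nat.strong_induction_on generalizing w with
  | _ N ih =>
  obtain rfl | hw0 := eq_or_ne w 0
  · exact zero_mem T
  obtain ⟨a, ha⟩ := exists_isLeadingExp D hw0
  obtain ⟨b, hb⟩ := exists_isLeadingExp D hs0
  have haG : a ∈ AddSubgroup.closure (Set.range v) := by
    have hS : AddSubmonoid.closure (Set.range v) ≤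
        (AddSubgroup.closure (Set.range v)).toAddSubmonoid :=
      AddSubmonoid.closure_le.mpr AddSubgroup.subset_closure
    have hab := hS ((hT _).mp hws (ha.mul hD hadd hb).1)
    have hb' := hS ((hT _).mp hs hb.1)
    simpa using AddSubgroup.sub_mem _ hab hb'
  obtain ⟨U, hU⟩ := exists_finset_support_pow_subset_add (fun t ht => (hT t).mp ht) hw
  obtain ⟨d, hd, hda⟩ := exists_pos_nsmul_mem_closure_of_forall_nsmul_mem_add v U a
    fun k => hU k (ha.pow hD hadd k).1
  have hlead : single a (w.coeff a) ∈ T := (hT _).mpr fun c hc => by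
    rw [Finset.mem_coe, AddMonoidAlgebra.coeff_single] at hc
    rw [Finset.mem_singleton.mp (Finsupp.support_single_subset hc)]
    exact hsat a haG d hd hda
  have herase : erase a w = w - single a (w.coeff a) := eq_sub_of_add_eq' (single_add_erase a w)
  have hrest : erase a w ∈ T := by
    refine ih _ ?_ ?_ ?_ rfl
    · rw [← hN, coeff_erase, Finsupp.support_erase]
      exact Finset.card_erase_lt_of_mem ha.1
    · rw [herase]
      exact hw.sub (isIntegral_algebraMap (x := (⟨_, hlead⟩ : T)))
    · rw [herase, sub_mul]
      exact sub_mem hws (mul_mem hlead hs)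
  rw [← single_add_erase a w]
  exact add_mem hlead hrest

theorem monomial_subring_isIntegrallyClosed_of_normal_general (K : Type*) [Field K] {n q : ℕ}
    (v : Fin q → Fin n → ℤ) (hnorm : IsNormalConfig v) :
    IsIntegrallyClosed
      (Algebra.adjoin K (Set.range fun i =>
        (AddMonoidAlgebra.single (v i) 1 : AddMonoidAlgebra K (Fin n → ℤ)))) := by
  have := isIntegrallyClosed_pi_int K (Fin n)
  refine Subalgebra.isIntegrallyClosed_of_forall_mul_mem _ fun w hw s hs hs0 hws => ?_
  exact mem_of_isIntegral_of_mul_mem (D := (toLex : (Fin n → ℤ) → Lex (Fin n → ℤ)))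
    toLex.injective (fun _ _ => rfl) (mem_adjoin_range_single_one_iff v)
    (fun a ha d hd hda => hnorm.mem_closure_of_nsmul_mem ha hd hda) hw hs hs0 hws

/-- If the configuration `v` is normal, then the monomial subring
`K[F] = K[x^{v_1},…,x^{v_q}]` of the Laurent polynomial ring is normal, i.e.,
integrally closed in its field of fractions. -/
theorem monomial_subring_isIntegrallyClosed_of_normal (K : Type*) [Field K] {n q : ℕ}
    (hn : 0 < n) (hq : 0 < q) (v : Fin q → Fin n → ℤ) (hnorm : IsNormalConfig v) :
    IsIntegrallyClosed
      (Algebra.adjoin K (Set.range fun i =>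
        (AddMonoidAlgebra.single (v i) 1 : AddMonoidAlgebra K (Fin n → ℤ)))) :=
  monomial_subring_isIntegrallyClosed_of_normal_general K v hnorm
end
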